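/- The Laurent series θ is irrational: there exist no polynomials P, Q ∈ ℚ[X] with Q ≠ 0 such that θ · Q(X) = P(X) in ℚ((X)). -/

import Mathlib

/-- The words `W n` over the alphabet `{1,2}`:
`W 0 = ε`, `W 1 = 1`, `W (n+2) = W (n+1) 2 W n 2 W (n+1)`. -/
def W : ℕ → List ℕ
  | 0 => []
  | 1 => [1]
  | (n+2) => W (n+1) ++ [2] ++ W n ++ [2] ++ W (n+1)

/-- `w n` is the `n`-th letter (for `n ≥ 1`) of the common infinite extension of
the words `W n` (each `W n` being a prefix of `W (n+1)`). -/
def w (n : ℕ) : ℕ := (W n).getD (n-1) 0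

/-- `θ = ∑_{n ≥ 1} w(n) Xⁿ`, as a formal Laurent series over `ℚ`. -/
noncomputable def theta : LaurentSeries ℚ :=
  ((PowerSeries.mk fun n => if n = 0 then 0 else (w n : ℚ)) : PowerSeries ℚ)


/-!
The coefficients of a rational power series eventually satisfy a linear recurrence; since those of
`θ` take only the values `0, 1, 2`, two equal windows of the length of the recurrence make them
eventually periodic. But the limit word is the fixed point of the substitution `1 ↦ 122, 2 ↦ 12`,
and it is not eventually periodic: if `p` is an eventual period, the `1` opening a late block `k`
recurs `p` places later at the start of some block `k + r`; the shift by `p` then carries every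
later block onto the block `r` further on, so `r ≤ p / 2` is an eventual period too, an infinite
descent.
-/

def EventuallyPeriodic {α : Type*} (u : ℕ → α) (p : ℕ) : Prop :=
  ∃ N, ∀ n ≥ N, u (n + p) = u n

section RationalPowerSeries

open Polynomial PowerSeries Finset

namespace LinearRecurrence

variable {R : Type*} [CommSemiring R] {E : LinearRecurrence R} {u : ℕ → R}

theorem IsSolution.shift (hu : E.IsSolution u) (k : ℕ) : E.IsSolution fun n => u (n + k) := by
  intro n
  simp only [add_right_comm n _ k]
  exact hu (n + k)

theorem IsSolution.exists_eventuallyPeriodic (hu : E.IsSolution u)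
    (hfin : (Set.range u).Finite) : ∃ p, 0 < p ∧ EventuallyPeriodic u p := by
  have : Finite (Set.range u) := hfin.to_subtype
  let window : ℕ → Fin E.order → Set.range u := fun k i => ⟨u (i + k), i + k, rfl⟩
  obtain ⟨a, b, hab, h⟩ := Finite.exists_ne_map_eq_of_infinite window
  wlog hlt : a < b generalizing a b
  · exact this b a hab.symm h.symm (by omega)
  have heq : (fun n => u (n + a)) = fun n => u (n + b) :=
    (E.eq_iff_eqOn_range_order _ _ (hu.shift a) (hu.shift b)).mpr fun n hn =>
      congrArg Subtype.val (congrFun h ⟨n, by simpa using hn⟩)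
  refine ⟨b - a, by omega, a, fun n hn => ?_⟩
  have := congrFun heq (n - a)
  simp only [Nat.sub_add_cancel hn] at this
  rw [this, show n - a + b = n + (b - a) by omega]

end LinearRecurrence

theorem PowerSeries.coeff_add_natDegree_mk_mul {R : Type*} [CommSemiring R] (f : ℕ → R)
    (Q : R[X]) (k : ℕ) :
    coeff (k + Q.natDegree) (mk f * (Q : R⟦X⟧)) =
      ∑ i ∈ range (Q.natDegree + 1), f (k + i) * Q.coeff (Q.natDegree - i) := by
  rw [coeff_mul, Finset.Nat.sum_antidiagonal_eq_sum_range_succ_mk, Nat.succ_eq_add_one, add_assoc,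
    sum_range_add, sum_eq_zero, zero_add]
  · refine sum_congr rfl fun i _ => ?_
    simp only [coeff_mk, Polynomial.coeff_coe]
    congr 2
    omega
  · intro i hi
    simp only [mem_range] at hi
    simp only [coeff_mk, Polynomial.coeff_coe]
    rw [Polynomial.coeff_eq_zero_of_natDegree_lt (by omega), mul_zero]

/-- Solved for the trailing coefficient of `Q`, the vanishing of the coefficients of `mk f * Q`
beyond `P.natDegree` is a recurrence of order `Q.natDegree - Q.natTrailingDegree`. -/
theorem PowerSeries.exists_isSolution_of_mk_mul_eq {K : Type*} [Field K] {f : ℕ → K}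
    {P Q : K[X]} (hQ : Q ≠ 0) (h : mk f * (Q : K⟦X⟧) = P) :
    ∃ (E : LinearRecurrence K) (M : ℕ), E.IsSolution fun n => f (n + M) := by
  obtain ⟨d, hd⟩ : ∃ d, Q.natDegree = d := ⟨_, rfl⟩
  obtain ⟨j, hj⟩ : ∃ j, Q.natTrailingDegree = j := ⟨_, rfl⟩
  have hjd : j ≤ d := hd ▸ hj ▸ natTrailingDegree_le_natDegree Q
  have ha : Q.coeff j ≠ 0 := hj ▸ trailingCoeff_nonzero_iff_nonzero.mpr hQ
  refine ⟨⟨d - j, fun i => -Q.coeff (d - i) / Q.coeff j⟩, P.natDegree + 1, fun n => ?_⟩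
  have hrec := coeff_add_natDegree_mk_mul f Q (n + (P.natDegree + 1))
  rw [h, Polynomial.coeff_coe, Polynomial.coeff_eq_zero_of_natDegree_lt (by omega), hd,
    show d + 1 = d - j + 1 + j by omega, sum_range_add, sum_eq_zero (s := range j), add_zero,
    sum_range_succ, Nat.sub_sub_self hjd] at hrec
  · have hsum :
        ∑ i ∈ range (d - j), -Q.coeff (d - i) / Q.coeff j * f (n + (P.natDegree + 1) + i) =
          -(∑ i ∈ range (d - j), f (n + (P.natDegree + 1) + i) * Q.coeff (d - i)) / Q.coeff j := by
      rw [neg_div, sum_div, ← sum_neg_distrib]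
      exact sum_congr rfl fun i _ => by ring
    dsimp only
    rw [Fin.sum_univ_eq_sum_range
      (fun i => -Q.coeff (d - i) / Q.coeff j * f (n + i + (P.natDegree + 1)))]
    simp only [add_right_comm n _ (P.natDegree + 1)]
    rw [hsum, eq_div_iff ha]
    linear_combination -hrec
  · intro i hi
    rw [mem_range] at hi
    rw [Polynomial.coeff_eq_zero_of_lt_natTrailingDegree (by omega), mul_zero]

theorem PowerSeries.exists_eventuallyPeriodic_of_mk_mul_eq {K : Type*} [Field K] {f : ℕ → K}
    {P Q : K[X]} (hQ : Q ≠ 0) (h : mk f * (Q : K⟦X⟧) = P) (hfin : (Set.range f).Finite) :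
    ∃ p, 0 < p ∧ EventuallyPeriodic f p := by
  obtain ⟨E, M, hE⟩ := exists_isSolution_of_mk_mul_eq hQ h
  obtain ⟨p, hp, N, hN⟩ :=
    hE.exists_eventuallyPeriodic (hfin.subset (Set.range_comp_subset_range (· + M) f))
  refine ⟨p, hp, N + M, fun n hn => ?_⟩
  have := hN (n - M) (by omega)
  dsimp only at this
  rwa [add_right_comm, Nat.sub_add_cancel (by omega)] at this

end RationalPowerSeries

def σ (a : ℕ) : List ℕ := if a = 1 then [1, 2, 2] else [1, 2]

theorem flatMap_σ_W_append_one : ∀ n, (W n).flatMap σ ++ [1] = W (n + 1)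
  | 0 => rfl
  | 1 => rfl
  | n + 2 => by
    have h₁ := flatMap_σ_W_append_one (n + 1)
    have h₀ := flatMap_σ_W_append_one n
    rw [show W (n + 2) = W (n + 1) ++ [2] ++ W n ++ [2] ++ W (n + 1) from rfl,
      show W (n + 2 + 1) = W (n + 2) ++ [2] ++ W (n + 1) ++ [2] ++ W (n + 2) from rfl,
      ← h₁, ← h₀]
    simp [σ]

theorem mem_W {n a : ℕ} (h : a ∈ W n) : a = 1 ∨ a = 2 := by
  cases n with
  | zero => simp [W] at h
  | succ n =>
    rw [← flatMap_σ_W_append_one] at h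
    simp only [List.mem_append, List.mem_flatMap, List.mem_singleton] at h
    rcases h with ⟨b, -, hb⟩ | rfl
    · unfold σ at hb; split_ifs at hb <;> simp at hb <;> omega
    · exact .inl rfl

theorem le_length_W : ∀ n, n ≤ (W n).length
  | 0 => Nat.zero_le _
  | 1 => le_refl _
  | n + 2 => by
    have := le_length_W (n + 1)
    simp only [W, List.length_append, List.length_singleton]
    omega

theorem W_prefix_W_succ (n : ℕ) : W n <+: W (n + 1) := by
  cases n with
  | zero => exact List.nil_prefix
  | succ n => exact ⟨[2] ++ W n ++ [2] ++ W (n + 1), by simp [W]⟩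

theorem W_prefix_W_of_le {m n : ℕ} (h : m ≤ n) : W m <+: W n := by
  induction n, h using Nat.le_induction with
  | base => exact List.prefix_refl _
  | succ n _ ih => exact ih.trans (W_prefix_W_succ n)

def letter (n : ℕ) : ℕ := w (n + 1)

theorem getElem_W {m i : ℕ} (hi : i < (W m).length) : (W m)[i] = letter i := by
  have hi' : i < (W (i + 1)).length := le_length_W (i + 1)
  rw [letter, w, Nat.add_sub_cancel, List.getD_eq_getElem _ _ hi']
  rcases le_total m (i + 1) with h | h
  · exact (W_prefix_W_of_le h).getElem hi
  · exact ((W_prefix_W_of_le h).getElem hi').symm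

theorem W_eq_map_letter_range (m : ℕ) : W m = (List.range (W m).length).map letter :=
  List.ext_getElem (by simp) fun i hi _ => by simp [getElem_W hi]

theorem letter_eq_one_or_two (n : ℕ) : letter n = 1 ∨ letter n = 2 := by
  have hn : n < (W (n + 1)).length := le_length_W (n + 1)
  exact getElem_W hn ▸ mem_W (List.getElem_mem hn)

theorem List.eq_map_range_of_prefix {α : Type*} {l : List α} {f : ℕ → α} {n : ℕ}
    (h : l <+: (List.range n).map f) : l = (List.range l.length).map f := by
  have hl : l.length ≤ n := by simpa using h.length_le
  nth_rewrite 1 [List.prefix_iff_eq_take.mp h]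
  rw [← List.map_take, List.take_range, min_eq_left hl]

/-- Where the block `σ (letter k)` starts in the factorisation of the limit word into blocks. -/
def blockStart (k : ℕ) : ℕ := (((List.range k).map letter).flatMap σ).length

/-- The limit word is a fixed point of `σ`. -/
theorem map_letter_range_blockStart (k : ℕ) :
    (List.range (blockStart k)).map letter = ((List.range k).map letter).flatMap σ := by
  have hk : (List.range k).map letter <+: W (k + 1) := by
    rw [W_eq_map_letter_range (k + 1)]
    have hle : k ≤ (W (k + 1)).length := (le_length_W (k + 1)).trans' (Nat.le_succ k)
    simpa [← List.map_take, List.take_range, hle] using List.take_prefix k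
      ((List.range (W (k + 1)).length).map letter)
  have : ((List.range k).map letter).flatMap σ <+: W (k + 2) :=
    (hk.flatMap σ).trans (flatMap_σ_W_append_one (k + 1) ▸ List.prefix_append _ _)
  rw [W_eq_map_letter_range] at this
  exact (List.eq_map_range_of_prefix this).symm

theorem blockStart_succ (k : ℕ) : blockStart (k + 1) = blockStart k + (σ (letter k)).length := by
  simp [blockStart, List.range_succ]

theorem letter_blockStart_add {k i : ℕ} (hi : i < (σ (letter k)).length) :
    letter (blockStart k + i) = (σ (letter k))[i] := by
  have h := congrArg (·[blockStart k + i]?) (map_letter_range_blockStart (k + 1))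
  have hA : (((List.range k).map letter).flatMap σ).length = blockStart k := rfl
  simp only [List.range_succ, List.map_append, List.flatMap_append] at h
  rw [List.getElem?_append_right (hA ▸ Nat.le_add_right _ _), hA, Nat.add_sub_cancel_left] at h
  simpa [blockStart_succ, hi] using h

theorem two_le_length_σ (a : ℕ) : 2 ≤ (σ a).length := by
  unfold σ; split_ifs <;> simp

theorem letter_blockStart (k : ℕ) : letter (blockStart k) = 1 := by
  have h := letter_blockStart_add (k := k) (i := 0) (by have := two_le_length_σ (letter k); omega)
  rw [Nat.add_zero] at h
  rw [h]; unfold σ; split_ifs <;> rfl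

/-- The third letter of block `k` is the last one of `σ 1 = [1, 2, 2]` or the first one of the
next block. -/
theorem letter_blockStart_add_two (k : ℕ) : letter (blockStart k + 2) = 3 - letter k := by
  rcases letter_eq_one_or_two k with h | h
  · rw [letter_blockStart_add (by simp [h, σ])]
    simp [h, σ]
  · have hc : blockStart k + 2 = blockStart (k + 1) := by simp [blockStart_succ, h, σ]
    rw [hc, letter_blockStart, h]

theorem blockStart_add_le (k j : ℕ) : blockStart k + 2 * j ≤ blockStart (k + j) := by
  induction j with
  | zero => rfl
  | succ j ih =>
    have := two_le_length_σ (letter (k + j))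
    rw [← add_assoc, blockStart_succ]
    omega

theorem two_mul_le_blockStart (k : ℕ) : 2 * k ≤ blockStart k := by
  simpa [blockStart] using blockStart_add_le 0 k

theorem strictMono_blockStart : StrictMono blockStart :=
  strictMono_nat_of_lt_succ fun k => by have := blockStart_add_le k 1; omega

theorem exists_blockStart_le_lt_blockStart_succ (n : ℕ) :
    ∃ k, blockStart k ≤ n ∧ n < blockStart (k + 1) := by
  induction n with
  | zero => exact ⟨0, Nat.zero_le _, strictMono_blockStart (Nat.zero_lt_one)⟩
  | succ n ih =>
    obtain ⟨k, hlo, hhi⟩ := ih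
    by_cases h : n + 1 < blockStart (k + 1)
    · exact ⟨k, by omega, h⟩
    · exact ⟨k + 1, by omega, by have := blockStart_add_le (k + 1) 1; omega⟩

theorem exists_blockStart_eq_of_letter_eq_one {n : ℕ} (hn : letter n = 1) :
    ∃ k, blockStart k = n := by
  obtain ⟨k, hlo, hhi⟩ := exists_blockStart_le_lt_blockStart_succ n
  rw [blockStart_succ] at hhi
  obtain ⟨i, rfl⟩ := Nat.exists_eq_add_of_le hlo
  rw [letter_blockStart_add (by omega)] at hn
  refine ⟨k, ?_⟩
  rcases i with _ | _ | i
  · rfl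
  · unfold σ at hn; split_ifs at hn <;> simp at hn
  · unfold σ at hhi hn; split_ifs at hhi hn <;> simp at hhi hn

theorem exists_lt_eventuallyPeriodic_letter {p : ℕ} (hp : EventuallyPeriodic letter p)
    (hp0 : 0 < p) : ∃ r, 0 < r ∧ r < p ∧ EventuallyPeriodic letter r := by
  obtain ⟨N, hN⟩ := hp
  have N_le_blockStart (k : ℕ) (hk : N ≤ k) : N ≤ blockStart k := by
    have := two_mul_le_blockStart k
    omega
  obtain ⟨m, hm⟩ := exists_blockStart_eq_of_letter_eq_one
    (by rw [hN _ (N_le_blockStart N le_rfl), letter_blockStart] : letter (blockStart N + p) = 1)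
  have hNm : N < m := strictMono_blockStart.lt_iff_lt.mp (by omega)
  obtain ⟨r, rfl⟩ := Nat.exists_eq_add_of_lt hNm
  have h2r := blockStart_add_le N (r + 1)
  rw [← add_assoc, hm] at h2r
  have letter_add_eq (k : ℕ) (hk : N ≤ k) (hkr : blockStart (k + (r + 1)) = blockStart k + p) :
      letter (k + (r + 1)) = letter k := by
    have h := letter_blockStart_add_two (k + (r + 1))
    rw [hkr, add_right_comm, hN _ ((N_le_blockStart k hk).trans (Nat.le_add_right _ 2)),
      letter_blockStart_add_two] at h
    have := letter_eq_one_or_two k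
    have := letter_eq_one_or_two (k + (r + 1))
    omega
  have blockStart_add_eq (k : ℕ) (hk : N ≤ k) :
      blockStart (k + (r + 1)) = blockStart k + p := by
    induction k, hk using Nat.le_induction with
    | base => rw [← add_assoc, hm]
    | succ k hk ih =>
      rw [add_right_comm, blockStart_succ, blockStart_succ, ih, letter_add_eq k hk ih]
      ring
  exact ⟨r + 1, by omega, by omega, N, fun k hk => letter_add_eq k hk (blockStart_add_eq k hk)⟩

theorem not_eventuallyPeriodic_letter {p : ℕ} (hp0 : 0 < p) : ¬ EventuallyPeriodic letter p := by
  induction p using Nat.strong_induction_on with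
  | _ p ih =>
    intro hp
    obtain ⟨r, hr0, hrp, hr⟩ := exists_lt_eventuallyPeriodic_letter hp hp0
    exact ih r hrp hr0 hr

/-- `θ` is irrational: there are no polynomials `P, Q ∈ ℚ[X]` with `Q ≠ 0`
and `θ · Q(X) = P(X)` in `ℚ((X))`. -/
theorem theta_irrational :
    ¬ ∃ P Q : Polynomial ℚ, Q ≠ 0 ∧
      theta * ((Q : PowerSeries ℚ) : LaurentSeries ℚ)
        = ((P : PowerSeries ℚ) : LaurentSeries ℚ) := by
  rintro ⟨P, Q, hQ, h⟩
  set f : ℕ → ℚ := fun n => if n = 0 then 0 else (w n : ℚ)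
  have hf : PowerSeries.mk f * (Q : PowerSeries ℚ) = P :=
    HahnSeries.ofPowerSeries_injective (Γ := ℤ) (by rwa [map_mul])
  have hfin : (Set.range f).Finite := (({0, 1, 2} : Set ℚ).toFinite).subset <| by
    rintro _ ⟨_ | n, rfl⟩
    · simp [f]
    · rcases letter_eq_one_or_two n with hn | hn <;> rw [letter] at hn <;> simp [f, hn]
  obtain ⟨p, hp, N, hN⟩ := PowerSeries.exists_eventuallyPeriodic_of_mk_mul_eq hQ hf hfin
  refine not_eventuallyPeriodic_letter hp ⟨N, fun n hn => ?_⟩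
  simpa only [letter, f, add_right_comm n 1 p, Nat.add_one_ne_zero, if_false, Nat.cast_inj]
    using hN (n + 1) (by omega)
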